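/- arXiv:2409.15539 — 2 statements merged into one kernel-verified Lean document; each statement's English description precedes it below -/
import Mathlib

section
/- Chapman–Kolmogorov relation for the one-dimensional pure-death process: for θ > 0 with rates λ_h = h(θ + h − 1)/2, define p_{m,n}(s) = e^{−λ_m s} if n = m, and p_{m,n}(s) = C_{m,n}(s) for 0 ≤ n < m where C_{m,n}(s) = (∏_{h=n+1}^{m} λ_h)(−1)^{m−n} Σ_{k=n}^{m} e^{−λ_k s}/∏_{n ≤ h ≤ m, h ≠ k}(λ_k − λ_h). Then for all s, u ≥ 0 and 0 ≤ n ≤ m: p_{m,n}(s + u) = Σ_{j=n}^{m} p_{m,j}(s) p_{j,n}(u). -/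
/-- The death process rates `λ_h = h(θ + h - 1)/2`. -/
noncomputable def deathRate (θ : ℝ) (h : ℕ) : ℝ := h * (θ + h - 1) / 2

/-- The partial-fraction expression `C_{m,n}(s)`. -/
noncomputable def Cdeath (θ : ℝ) (m n : ℕ) (s : ℝ) : ℝ :=
  (∏ h ∈ Finset.Icc (n + 1) m, deathRate θ h) * (-1 : ℝ) ^ (m - n) *
    ∑ k ∈ Finset.Icc n m, Real.exp (-(deathRate θ k) * s) /
      ∏ h ∈ (Finset.Icc n m).erase k, (deathRate θ k - deathRate θ h)

/-- Transition probabilities of the one-dimensional pure-death process. -/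
noncomputable def pDeath (θ : ℝ) (m n : ℕ) (s : ℝ) : ℝ :=
  if n = m then Real.exp (-(deathRate θ m) * s)
  else if n < m then Cdeath θ m n s
  else 0

/-!
Up to the factor `(∏_{h=n+1}^m λ_h) (-1)^(m-n)`, which is multiplicative along `n ≤ j ≤ m`,
`p_{m,n}(s)` is the divided difference of `x ↦ e^{-xs}` at the nodes `λ_n, …, λ_m`, which are
distinct because `λ` is strictly increasing. As `e^{-x(s+u)} = e^{-xu} e^{-xs}`, the relation is
the Leibniz rule `(fg)[x_n, …, x_m] = ∑_j f[x_n, …, x_j] g[x_j, …, x_m]` for divided differences.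
In Lagrange form this rule reduces to the orthogonality
`∑_{j=l}^{k} w_{n,j}(l) w_{j,m}(k) = δ_{lk} w_{n,m}(k)` of the Lagrange weights
`w_{a,b}(k) = ∏_{h ∈ [a,b], h ≠ k} (x_k - x_h)⁻¹`, whose off-diagonal case telescopes.
-/

open Finset Function

theorem prod_Icc_erase_eq_prod_Ico_mul_prod_Ioc {M : Type*} [CommMonoid M] (f : ℕ → M)
    {a b k : ℕ} (hak : a ≤ k) (hkb : k ≤ b) :
    ∏ h ∈ (Icc a b).erase k, f h = (∏ h ∈ Ico a k, f h) * ∏ h ∈ Ioc k b, f h := by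
  have hdisj : Disjoint (Ico a k) (Ioc k b) :=
    disjoint_left.2 fun x hx hx' => by simp only [mem_Ico, mem_Ioc] at hx hx'; omega
  rw [← prod_union hdisj]
  congr 1
  ext x
  simp only [mem_erase, mem_Icc, mem_union, mem_Ico, mem_Ioc]
  omega

theorem sum_Icc_Icc_comm {M : Type*} [AddCommMonoid M] (a b : ℕ) (f : ℕ → ℕ → M) :
    ∑ i ∈ Icc a b, ∑ j ∈ Icc i b, f i j = ∑ j ∈ Icc a b, ∑ i ∈ Icc a j, f i j := by
  simp only [← Ico_add_one_right_eq_Icc]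
  exact sum_Ico_Ico_comm a (b + 1) f

theorem prod_Icc_succ_mul_neg_one_pow_consecutive {R : Type*} [CommRing R] (f : ℕ → R)
    {a b c : ℕ} (hab : a ≤ b) (hbc : b ≤ c) :
    (∏ h ∈ Icc (b + 1) c, f h) * (-1) ^ (c - b) * ((∏ h ∈ Icc (a + 1) b, f h) * (-1) ^ (b - a)) =
      (∏ h ∈ Icc (a + 1) c, f h) * (-1) ^ (c - a) := by
  simp only [Icc_add_one_left_eq_Ioc]
  rw [← prod_Ioc_consecutive f hab hbc, show c - a = (c - b) + (b - a) by omega, pow_add]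
  ring

section DividedDifference

variable {r : ℕ → ℝ}

/-- The divided difference, in Lagrange form, of the values `f a, …, f b` at the nodes
`r a, …, r b`. -/
noncomputable def divDiff (r f : ℕ → ℝ) (a b : ℕ) : ℝ :=
  ∑ k ∈ Icc a b, f k / ∏ h ∈ (Icc a b).erase k, (r k - r h)

theorem sum_inv_prod_Ico_sub_mul_inv_prod_Ioc_sub (hr : Injective r) {l k : ℕ} (hlk : l < k) :
    ∑ j ∈ Icc l k, (∏ h ∈ Ico j k, (r k - r h))⁻¹ * (∏ h ∈ Ioc l j, (r l - r h))⁻¹ = 0 := by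
  set A : ℕ → ℝ := fun j => (∏ h ∈ Ico j k, (r k - r h))⁻¹
  set B : ℕ → ℝ := fun j => (∏ h ∈ Ico (l + 1) j, (r l - r h))⁻¹
  set G : ℕ → ℝ := fun j => if l < j ∧ j ≤ k then A j * B j else 0
  have hB : ∀ j, B (j + 1) = (∏ h ∈ Ioc l j, (r l - r h))⁻¹ := fun j => by
    simp only [B, Ico_add_one_add_one_eq_Ioc]
  have upper : ∀ j ∈ Icc l k, (r k - r j) * (A j * B (j + 1)) = G (j + 1) := by
    intro j hj
    rw [mem_Icc] at hj
    rcases hj.2.lt_or_eq with hjk | rfl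
    · have hne : r k - r j ≠ 0 := sub_ne_zero.2 (hr.ne hjk.ne')
      simp only [A, G, if_pos (⟨by omega, hjk⟩ : l < j + 1 ∧ j + 1 ≤ k),
        prod_eq_prod_Ico_succ_bot hjk, mul_inv]
      field_simp
    · simp [G]
  have lower : ∀ j ∈ Icc l k, (r l - r j) * (A j * B (j + 1)) = G j := by
    intro j hj
    rw [mem_Icc] at hj
    rcases hj.1.lt_or_eq with hlj | rfl
    · have hne : r l - r j ≠ 0 := sub_ne_zero.2 (hr.ne hlj.ne)
      simp only [B, G, if_pos (⟨hlj, hj.2⟩ : l < j ∧ j ≤ k), prod_Ico_succ_top hlj, mul_inv]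
      field_simp
    · simp [G]
  have hkl : r k - r l ≠ 0 := sub_ne_zero.2 (hr.ne hlk.ne')
  simp_rw [← hB]
  refine (mul_eq_zero.1 ?_).resolve_left hkl
  -- `r k - r l = (r k - r j) - (r l - r j)` turns the `j`-th term into `G (j + 1) - G j`.
  calc (r k - r l) * ∑ j ∈ Icc l k, A j * B (j + 1)
      = ∑ j ∈ Icc l k, ((r k - r j) * (A j * B (j + 1)) - (r l - r j) * (A j * B (j + 1))) := by
        rw [mul_sum]; exact sum_congr rfl fun _ _ => by ring
    _ = ∑ j ∈ Icc l k, (G (j + 1) - G j) :=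
        sum_congr rfl fun j hj => by rw [upper j hj, lower j hj]
    _ = 0 := by rw [sum_Icc_sub hlk.le G]; simp [G]

theorem sum_inv_prod_erase_mul_inv_prod_erase (hr : Injective r) {n l k m : ℕ}
    (hnl : n ≤ l) (hlk : l ≤ k) (hkm : k ≤ m) :
    ∑ j ∈ Icc l k,
        (∏ h ∈ (Icc n j).erase l, (r l - r h))⁻¹ * (∏ h ∈ (Icc j m).erase k, (r k - r h))⁻¹ =
      if l = k then (∏ h ∈ (Icc n m).erase k, (r k - r h))⁻¹ else 0 := by
  rcases hlk.lt_or_eq with hlk | rfl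
  · rw [if_neg hlk.ne]
    calc _ = ∑ j ∈ Icc l k, ((∏ h ∈ Ico n l, (r l - r h))⁻¹ * (∏ h ∈ Ioc k m, (r k - r h))⁻¹) *
          ((∏ h ∈ Ico j k, (r k - r h))⁻¹ * (∏ h ∈ Ioc l j, (r l - r h))⁻¹) :=
          sum_congr rfl fun j hj => by
            rw [mem_Icc] at hj
            rw [prod_Icc_erase_eq_prod_Ico_mul_prod_Ioc _ hnl hj.1,
              prod_Icc_erase_eq_prod_Ico_mul_prod_Ioc _ hj.2 hkm, mul_inv, mul_inv]
            ring
      _ = 0 := by rw [← mul_sum, sum_inv_prod_Ico_sub_mul_inv_prod_Ioc_sub hr hlk, mul_zero]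
  · simp [prod_Icc_erase_eq_prod_Ico_mul_prod_Ioc _ hnl hkm, mul_comm]

theorem divDiff_mul (hr : Injective r) (f g : ℕ → ℝ) (n m : ℕ) :
    divDiff r (fun k => f k * g k) n m = ∑ j ∈ Icc n m, divDiff r f n j * divDiff r g j m := by
  symm
  simp only [divDiff, sum_mul_sum]
  -- Reorder the sum over `n ≤ l ≤ j ≤ k ≤ m` so that `j` is innermost.
  rw [← sum_Icc_Icc_comm]
  refine sum_congr rfl fun l hl => ?_
  rw [mem_Icc] at hl
  rw [sum_Icc_Icc_comm]
  calc _ = ∑ k ∈ Icc l m, f l * g k *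
        if l = k then (∏ h ∈ (Icc n m).erase k, (r k - r h))⁻¹ else 0 :=
        sum_congr rfl fun k hk => by
          rw [mem_Icc] at hk
          simp only [← sum_inv_prod_erase_mul_inv_prod_erase hr hl.1 hk.1 hk.2, mul_sum,
            div_eq_mul_inv]
          exact sum_congr rfl fun _ _ => by ring
    _ = _ := by simp [div_eq_mul_inv, hl.2]

end DividedDifference

theorem deathRate_strictMono {θ : ℝ} (hθ : 0 < θ) : StrictMono (deathRate θ) := by
  intro i j hij
  have hij' : (i : ℝ) + 1 ≤ j := by exact_mod_cast hij
  have hi : (0 : ℝ) ≤ i := i.cast_nonneg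
  unfold deathRate
  nlinarith

theorem pDeath_eq_mul_divDiff (θ : ℝ) {n m : ℕ} (hnm : n ≤ m) (s : ℝ) :
    pDeath θ m n s = (∏ h ∈ Icc (n + 1) m, deathRate θ h) * (-1) ^ (m - n) *
      divDiff (deathRate θ) (fun k => Real.exp (-deathRate θ k * s)) n m := by
  rcases hnm.lt_or_eq with hnm | rfl
  · simp only [pDeath, if_neg hnm.ne, if_pos hnm]
    rfl
  · simp [pDeath, divDiff]

theorem pDeath_chapman_kolmogorov_general (θ : ℝ) (hθ : 0 < θ) (s u : ℝ)
    (n m : ℕ) (hnm : n ≤ m) :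
    pDeath θ m n (s + u) = ∑ j ∈ Finset.Icc n m, pDeath θ m j s * pDeath θ j n u := by
  have hexp : (fun k => Real.exp (-deathRate θ k * (s + u))) =
      fun k => Real.exp (-deathRate θ k * u) * Real.exp (-deathRate θ k * s) :=
    funext fun k => by rw [← Real.exp_add]; ring_nf
  rw [pDeath_eq_mul_divDiff θ hnm, hexp, divDiff_mul (deathRate_strictMono hθ).injective, mul_sum]
  refine sum_congr rfl fun j hj => ?_
  rw [mem_Icc] at hj
  rw [pDeath_eq_mul_divDiff θ hj.2, pDeath_eq_mul_divDiff θ hj.1,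
    ← prod_Icc_succ_mul_neg_one_pow_consecutive _ hj.1 hj.2]
  ring

theorem pDeath_chapman_kolmogorov (θ : ℝ) (hθ : 0 < θ) (s u : ℝ)
    (hs : 0 ≤ s) (hu : 0 ≤ u) (n m : ℕ) (hnm : n ≤ m) :
    pDeath θ m n (s + u) = ∑ j ∈ Finset.Icc n m, pDeath θ m j s * pDeath θ j n u :=
  pDeath_chapman_kolmogorov_general θ hθ s u n m hnm
end

section
/- Solution of the death-process forward equations: for θ > 0 and distinct rates λ_h = h(θ + h − 1)/2, the functions f_n(s) = p_{m,n}(s) (with p_{m,m}(s) = e^{−λ_m s} and p_{m,n}(s) = C_{m,n}(s) for n < m) satisfy the ODE system f_m'(s) = −λ_m f_m(s) and f_n'(s) = λ_{n+1} f_{n+1}(s) − λ_n f_n(s) for 0 ≤ n < m, with initial conditions f_m(0) = 1 and f_n(0) = 0 for n < m. -/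
open Finset

section PartialFractions

variable {F ι : Type*} [Field F] [DecidableEq ι]

theorem sum_inv_prod_erase_sub_eq_zero {s : Finset ι} {v : ι → F} (hv : Set.InjOn v s)
    (hs : 2 ≤ #s) : ∑ k ∈ s, (∏ h ∈ s.erase k, (v k - v h))⁻¹ = 0 := by
  have h := Lagrange.coeff_eq_sum hv (P := 1)
    (by rw [Polynomial.degree_one]; exact_mod_cast (by omega : 0 < #s))
  rw [Polynomial.coeff_one, if_neg (by omega)] at h
  simp only [Polynomial.eval_one, one_div] at h
  exact h.symm

theorem sum_insert_sub_mul_div_prod_erase_sub {t : Finset ι} {a : ι} (ha : a ∉ t) {v : ι → F}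
    (hv : ∀ k ∈ t, v k ≠ v a) (f : ι → F) :
    ∑ k ∈ insert a t, (v k - v a) * f k / ∏ h ∈ (insert a t).erase k, (v k - v h) =
      ∑ k ∈ t, f k / ∏ h ∈ t.erase k, (v k - v h) := by
  rw [sum_insert ha, sub_self, zero_mul, zero_div, zero_add]
  refine sum_congr rfl fun k hk => ?_
  have hka : k ≠ a := fun h => ha (h ▸ hk)
  rw [erase_insert_of_ne hka.symm, prod_insert fun h => ha (mem_of_mem_erase h),
    mul_div_mul_left _ _ (sub_ne_zero.mpr (hv k hk))]

end PartialFractions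

theorem hasDerivAt_exp_mul (c s : ℝ) :
    HasDerivAt (fun s => Real.exp (c * s)) (c * Real.exp (c * s)) s := by
  simpa [mul_comm] using ((hasDerivAt_id' s).const_mul c).exp

/-- The divided difference of `x ↦ exp (-x * s)` at the nodes `v k`, `k ∈ S`. -/
noncomputable def expDivDiff {ι : Type*} [DecidableEq ι] (S : Finset ι) (v : ι → ℝ) (s : ℝ) : ℝ :=
  ∑ k ∈ S, Real.exp (-v k * s) / ∏ h ∈ S.erase k, (v k - v h)

section ExpDivDiff

variable {ι : Type*} [DecidableEq ι] {v : ι → ℝ}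

theorem expDivDiff_zero {S : Finset ι} (hv : Set.InjOn v S) (hS : 2 ≤ #S) :
    expDivDiff S v 0 = 0 := by
  simp only [expDivDiff, mul_zero, Real.exp_zero, one_div]
  exact sum_inv_prod_erase_sub_eq_zero hv hS

theorem hasDerivAt_expDivDiff_insert {t : Finset ι} {a : ι} (ha : a ∉ t)
    (hv : ∀ k ∈ t, v k ≠ v a) (s : ℝ) :
    HasDerivAt (expDivDiff (insert a t) v)
      (-expDivDiff t v s - v a * expDivDiff (insert a t) v s) s := by
  set S := insert a t
  have hterm (k : ι) : HasDerivAt (fun s => Real.exp (-v k * s) / ∏ h ∈ S.erase k, (v k - v h))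
      (-((v k - v a) * Real.exp (-v k * s) / ∏ h ∈ S.erase k, (v k - v h)) -
        v a * (Real.exp (-v k * s) / ∏ h ∈ S.erase k, (v k - v h))) s :=
    ((hasDerivAt_exp_mul (-v k) s).div_const _).congr_deriv (by ring)
  have hsum := HasDerivAt.fun_sum (u := S) fun k _ => hterm k
  rw [sum_sub_distrib, sum_neg_distrib, ← mul_sum,
    sum_insert_sub_mul_div_prod_erase_sub ha hv] at hsum
  exact hsum

end ExpDivDiff

theorem deathRate_injective {θ : ℝ} (hθ : 0 < θ) : Function.Injective (deathRate θ) := by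
  intro a b hab
  have hfactor : ((a : ℝ) - b) * (θ + a + b - 1) = 0 := by
    unfold deathRate at hab
    linear_combination 2 * hab
  rcases mul_eq_zero.mp hfactor with h | h
  · exact_mod_cast sub_eq_zero.mp h
  · have : a + b = 0 := by
      by_contra hne
      have : (1 : ℝ) ≤ a + b := by exact_mod_cast Nat.one_le_iff_ne_zero.mpr hne
      linarith
    omega

theorem Cdeath_eq_expDivDiff (θ : ℝ) (m n : ℕ) (s : ℝ) :
    Cdeath θ m n s = (∏ h ∈ Icc (n + 1) m, deathRate θ h) * (-1 : ℝ) ^ (m - n) *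
      expDivDiff (Icc n m) (deathRate θ) s :=
  rfl

theorem Cdeath_self (θ : ℝ) (m : ℕ) (s : ℝ) :
    Cdeath θ m m s = Real.exp (-deathRate θ m * s) := by
  simp [Cdeath]

theorem pDeath_eq_Cdeath {θ : ℝ} {m n : ℕ} (h : n ≤ m) (s : ℝ) :
    pDeath θ m n s = Cdeath θ m n s := by
  rcases h.eq_or_lt with rfl | hlt
  · simp [pDeath, Cdeath_self]
  · simp [pDeath, hlt.ne, hlt]

theorem hasDerivAt_Cdeath {θ : ℝ} (hθ : 0 < θ) {m n : ℕ} (hnm : n < m) (s : ℝ) :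
    HasDerivAt (Cdeath θ m n)
      (deathRate θ (n + 1) * Cdeath θ m (n + 1) s - deathRate θ n * Cdeath θ m n s) s := by
  have hrates : ∀ k ∈ Icc (n + 1) m, deathRate θ k ≠ deathRate θ n := fun k hk h => by
    have := deathRate_injective hθ h
    simp only [mem_Icc] at hk
    omega
  have hprod : ∏ h ∈ Icc (n + 1) m, deathRate θ h =
      deathRate θ (n + 1) * ∏ h ∈ Icc (n + 1 + 1) m, deathRate θ h := by
    rw [← insert_Icc_add_one_left_eq_Icc hnm, prod_insert (by simp)]
  have hsign : (-1 : ℝ) ^ (m - n) = -(-1) ^ (m - (n + 1)) := by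
    rw [show m - n = m - (n + 1) + 1 by omega, pow_succ]
    ring
  have hE := hasDerivAt_expDivDiff_insert (by simp) hrates s
  rw [insert_Icc_add_one_left_eq_Icc hnm.le] at hE
  refine (hE.const_mul ((∏ h ∈ Icc (n + 1) m, deathRate θ h) * (-1 : ℝ) ^ (m - n))).congr_deriv ?_
  rw [Cdeath_eq_expDivDiff, Cdeath_eq_expDivDiff, hsign, hprod]
  ring

theorem pDeath_forward_equations (θ : ℝ) (hθ : 0 < θ) (m : ℕ) :
    (∀ s : ℝ, HasDerivAt (fun s => pDeath θ m m s)
      (-(deathRate θ m) * pDeath θ m m s) s) ∧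
    (∀ n < m, ∀ s : ℝ, HasDerivAt (fun s => pDeath θ m n s)
      (deathRate θ (n + 1) * pDeath θ m (n + 1) s - deathRate θ n * pDeath θ m n s) s) ∧
    pDeath θ m m 0 = 1 ∧
    (∀ n < m, pDeath θ m n 0 = 0) := by
  refine ⟨fun s => ?_, fun n hnm s => ?_, by simp [pDeath], fun n hnm => ?_⟩
  · simpa only [pDeath, if_true] using hasDerivAt_exp_mul (-deathRate θ m) s
  · have hfun : (fun s => pDeath θ m n s) = Cdeath θ m n :=
      funext (pDeath_eq_Cdeath hnm.le)
    rw [hfun, pDeath_eq_Cdeath hnm.le, pDeath_eq_Cdeath hnm]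
    exact hasDerivAt_Cdeath hθ hnm s
  · rw [pDeath_eq_Cdeath hnm.le, Cdeath_eq_expDivDiff,
      expDivDiff_zero (deathRate_injective hθ).injOn (by rw [Nat.card_Icc]; omega), mul_zero]
end
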